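/- arXiv:2207.02378 — 2 statements merged into one kernel-verified Lean document; each statement's English description precedes it below -/
import Mathlib

section
/- Let α be an irrational real number of finite type τ < ∞, meaning there exists a constant c > 0 and for every ε > 0 a constant c(ε) > 0 with q·‖qα‖ ≥ c(ε)·q^{1-τ-ε} for all positive integers q, where ‖x‖ denotes the distance from x to the nearest integer. Fix ε > 0 and a positive integer w. Then for all sufficiently large K there exist coprime integers a and q with K^{1/τ - ε}·w^{-1} < q ≤ K such that |αw - a/q| ≤ 1/(qK). -/
/-- Distance from a real number to the nearest integer. -/
noncomputable def nint (x : ℝ) : ℝ := |x - round x|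

/-- Let `α` be irrational of finite type `τ`: for every `ε > 0` there is `c(ε) > 0` with
`q ‖qα‖ ≥ c(ε) q^{1-τ-ε}` for all positive integers `q`. Fix `ε > 0` and a positive
integer `w`. Then for all sufficiently large `K` there exist coprime integers `a, q` with
`K^{1/τ-ε} w⁻¹ < q ≤ K` and `|αw - a/q| ≤ 1/(qK)`. -/
theorem stmt_3 (α τ : ℝ) (hirr : Irrational α) (hτ : 0 < τ)
    (htype : ∀ ε > (0 : ℝ), ∃ c > (0 : ℝ), ∀ q : ℕ, 0 < q →
      c * (q : ℝ) ^ (1 - τ - ε) ≤ (q : ℝ) * nint ((q : ℝ) * α))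
    (ε : ℝ) (hε : 0 < ε) (w : ℕ) (hw : 0 < w) :
    ∃ K₀ : ℝ, ∀ K ≥ K₀, ∃ a q : ℤ, IsCoprime a q ∧
      K ^ (1 / τ - ε) * (w : ℝ)⁻¹ < (q : ℝ) ∧ (q : ℝ) ≤ K ∧
      |α * w - (a : ℝ) / (q : ℝ)| ≤ 1 / ((q : ℝ) * K) := by
  set ε' : ℝ := ε * τ ^ 2 / 2 with hε'def
  have hε' : 0 < ε' := by positivity
  obtain ⟨c, hc, H⟩ := htype ε' hε'
  have hτε' : 0 < τ + ε' := by linarith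
  refine ⟨max 2 (c ^ (-(2 / (ε * (τ + ε')))) + 1), fun K hK => ?_⟩
  have hK2 : (2 : ℝ) ≤ K := le_trans (le_max_left _ _) hK
  have hK1 : (1 : ℝ) ≤ K := by linarith
  have hKpos : (0 : ℝ) < K := by linarith
  have hKc : c ^ (-(2 / (ε * (τ + ε')))) < K := by
    have := le_trans (le_max_right _ _) hK; linarith
  set n : ℕ := ⌊K⌋₊ with hn
  have hnpos : 0 < n := Nat.floor_pos.mpr hK1
  have hnK : (n : ℝ) ≤ K := Nat.floor_le hKpos.le
  have hKn : K ≤ (n : ℝ) + 1 := (Nat.lt_floor_add_one K).le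
  obtain ⟨r, hr1, hr2⟩ := Real.exists_rat_abs_sub_le_and_den_le (α * w) hnpos
  set q : ℕ := r.den with hq
  set a : ℤ := r.num with ha
  have hqpos : 0 < q := r.pos
  have hqR : (0 : ℝ) < (q : ℝ) := by exact_mod_cast hqpos
  have hwR : (0 : ℝ) < (w : ℝ) := by exact_mod_cast hw
  have hrcast : (r : ℝ) = (a : ℝ) / (q : ℝ) := by rw [Rat.cast_def]
  have hqK : (q : ℝ) ≤ K := le_trans (by exact_mod_cast hr2) hnK
  have happrox : |α * w - (a : ℝ) / (q : ℝ)| ≤ 1 / (((n : ℝ) + 1) * q) := by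
    rw [← hrcast]; exact hr1
  have hfinal3 : |α * w - (a : ℝ) / (q : ℝ)| ≤ 1 / ((q : ℝ) * K) := by
    refine happrox.trans ?_
    rw [mul_comm ((n : ℝ) + 1) (q : ℝ)]
    gcongr
  -- lower bound on q via the type hypothesis
  set m : ℕ := q * w with hm
  have hmpos : 0 < m := Nat.mul_pos hqpos hw
  have hmR : (0 : ℝ) < (m : ℝ) := by exact_mod_cast hmpos
  have hnint : nint ((m : ℝ) * α) ≤ 1 / K := by
    have h1 : |(m : ℝ) * α - (a : ℝ)| ≤ 1 / K := by
      have hid : (m : ℝ) * α - (a : ℝ) = (q : ℝ) * (α * w - (a : ℝ) / (q : ℝ)) := by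
        push_cast [hm]; field_simp
      rw [hid, abs_mul, abs_of_pos hqR]
      calc (q : ℝ) * |α * w - (a : ℝ) / (q : ℝ)|
          ≤ (q : ℝ) * (1 / (((n : ℝ) + 1) * q)) := by gcongr
        _ = 1 / ((n : ℝ) + 1) := by field_simp
        _ ≤ 1 / K := by gcongr
    calc nint ((m : ℝ) * α) ≤ |(m : ℝ) * α - ((a : ℤ) : ℝ)| := round_le _ _
      _ ≤ 1 / K := h1
  have hH := H m hmpos
  have step1 : c * (m : ℝ) ^ (1 - τ - ε') ≤ (m : ℝ) / K := by
    refine hH.trans ?_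
    calc (m : ℝ) * nint ((m : ℝ) * α) ≤ (m : ℝ) * (1 / K) :=
          mul_le_mul_of_nonneg_left hnint hmR.le
      _ = (m : ℝ) / K := by ring
  have hpow : (0 : ℝ) < (m : ℝ) ^ (1 - τ - ε') := Real.rpow_pos_of_pos hmR _
  have step2 : c * K ≤ (m : ℝ) ^ (τ + ε') := by
    have e : (m : ℝ) = (m : ℝ) ^ (1 - τ - ε') * (m : ℝ) ^ (τ + ε') := by
      rw [← Real.rpow_add hmR]; norm_num
    have h2 : (m : ℝ) ^ (1 - τ - ε') * (c * K) ≤ (m : ℝ) ^ (1 - τ - ε') * (m : ℝ) ^ (τ + ε') := by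
      rw [← e]
      calc (m : ℝ) ^ (1 - τ - ε') * (c * K) = c * (m : ℝ) ^ (1 - τ - ε') * K := by ring
        _ ≤ (m : ℝ) / K * K := by gcongr
        _ = (m : ℝ) := by field_simp
    exact (mul_le_mul_iff_right₀ hpow).mp h2
  have step3 : (c * K) ^ (1 / (τ + ε')) ≤ (m : ℝ) := by
    have h3 := Real.rpow_le_rpow (by positivity) step2 (by positivity : (0:ℝ) ≤ 1 / (τ + ε'))
    rwa [← Real.rpow_mul hmR.le, mul_one_div, div_self hτε'.ne', Real.rpow_one] at h3
  -- exponent comparison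
  have hexp : 1 / τ - ε / 2 ≤ 1 / (τ + ε') := by
    have hid : 1 / (τ + ε') = 1 / τ - ε' / (τ * (τ + ε')) := by
      field_simp
      ring
    have h5 : ε' / (τ * (τ + ε')) ≤ ε / 2 := by
      rw [div_le_iff₀ (by positivity)]
      rw [hε'def]
      nlinarith [mul_pos hτ hε']
    linarith [hid ▸ le_refl (1 / (τ + ε'))]
  have hKexp : K ^ (1 / τ - ε / 2) ≤ K ^ (1 / (τ + ε')) :=
    Real.rpow_le_rpow_of_exponent_le hK1 hexp
  have hsplit : K ^ (1 / τ - ε / 2) = K ^ (ε / 2) * K ^ (1 / τ - ε) := by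
    rw [← Real.rpow_add hKpos]; ring_nf
  have hcK : (c * K) ^ (1 / (τ + ε')) = c ^ (1 / (τ + ε')) * K ^ (1 / (τ + ε')) :=
    Real.mul_rpow hc.le hKpos.le
  -- c^{1/(τ+ε')} K^{ε/2} > 1
  have hbig : 1 < c ^ (1 / (τ + ε')) * K ^ (ε / 2) := by
    have h4 : (c ^ (-(2 / (ε * (τ + ε'))))) ^ (ε / 2) < K ^ (ε / 2) :=
      Real.rpow_lt_rpow (by positivity) hKc (by positivity)
    have hre : (c ^ (-(2 / (ε * (τ + ε'))))) ^ (ε / 2) = c ^ (-(1 / (τ + ε'))) := by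
      rw [← Real.rpow_mul hc.le]
      congr 1
      field_simp
    rw [hre] at h4
    have hcx : (0 : ℝ) < c ^ (1 / (τ + ε')) := Real.rpow_pos_of_pos hc _
    have := mul_lt_mul_of_pos_left h4 hcx
    rwa [← Real.rpow_add hc, add_neg_cancel, Real.rpow_zero] at this
  -- conclude m > K^{1/τ - ε}
  have hmain : K ^ (1 / τ - ε) < (m : ℝ) := by
    have hKε : (0 : ℝ) < K ^ (1 / τ - ε) := Real.rpow_pos_of_pos hKpos _
    have hx : (0 : ℝ) < c ^ (1 / (τ + ε')) := Real.rpow_pos_of_pos hc _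
    calc K ^ (1 / τ - ε) = 1 * K ^ (1 / τ - ε) := (one_mul _).symm
      _ < c ^ (1 / (τ + ε')) * K ^ (ε / 2) * K ^ (1 / τ - ε) := by gcongr
      _ = c ^ (1 / (τ + ε')) * K ^ (1 / τ - ε / 2) := by rw [hsplit]; ring
      _ ≤ c ^ (1 / (τ + ε')) * K ^ (1 / (τ + ε')) := by gcongr
      _ = (c * K) ^ (1 / (τ + ε')) := hcK.symm
      _ ≤ (m : ℝ) := step3
  refine ⟨a, (q : ℤ), ?_, ?_, by push_cast; exact hqK, by push_cast; exact hfinal3⟩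
  · rw [Int.isCoprime_iff_gcd_eq_one]
    simpa [Int.gcd, ha, hq] using r.reduced
  · push_cast
    rw [← div_eq_mul_inv, div_lt_iff₀ hwR]
    calc K ^ (1 / τ - ε) < (m : ℝ) := hmain
      _ = (q : ℝ) * w := by push_cast [hm]; ring
end

section
/- Let α be irrational of finite type τ < ∞ and let β be a real number. Then the discrepancy D_{α,β}(M) of the sequence {α m + β} mod 1, m = 1, ..., M, satisfies D_{α,β}(M) ≤ M^{-1/τ + o(1)} as M → ∞, where the o(1) depends only on α. In particular, for every ε > 0 and all sufficiently large M, D_{α,β}(M) ≤ M^{-1/τ + ε}. -/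
open scoped Classical

namespace Stmt10Aux

/-- The counting function. -/
noncomputable def cnt (α β u v : ℝ) (M : ℕ) : ℕ :=
  ((Finset.Icc 1 M).filter (fun m : ℕ => Int.fract (α * m + β) ∈ Set.Ioo u v)).card

lemma fract_mem_iff {u v : ℝ} (hu : 0 ≤ u) (hv : v ≤ 1) (x : ℝ) :
    Int.fract x ∈ Set.Ioo u v ↔ ∃ n : ℤ, u < x - n ∧ x - n < v := by
  constructor
  · rintro ⟨h1, h2⟩
    exact ⟨⌊x⌋, by rwa [Int.self_sub_floor], by rwa [Int.self_sub_floor]⟩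
  · rintro ⟨n, h1, h2⟩
    have hfl : ⌊x⌋ = n := by
      rw [Int.floor_eq_iff]
      constructor <;> push_cast <;> nlinarith
    rw [Set.mem_Ioo, Int.fract, hfl]
    exact ⟨h1, h2⟩

lemma intCount_le {A B : ℝ} (hAB : A ≤ B) :
    ((Finset.Ioo ⌊A⌋ ⌈B⌉).card : ℝ) ≤ B - A + 1 := by
  rw [Int.card_Ioo]
  rcases le_or_gt (⌈B⌉ - ⌊A⌋ - 1) 0 with h | h
  · rw [Int.toNat_of_nonpos h]; push_cast; linarith
  · have hcast : (((⌈B⌉ - ⌊A⌋ - 1).toNat : ℕ) : ℝ) = ((⌈B⌉ : ℝ)) - ((⌊A⌋ : ℝ)) - 1 := by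
      rw [← Int.cast_natCast, Int.toNat_of_nonneg h.le]; push_cast; ring
    rw [hcast]
    have h1 : ((⌈B⌉ : ℝ)) < B + 1 := Int.ceil_lt_add_one B
    have h2 : A - 1 < ((⌊A⌋ : ℝ)) := Int.sub_one_lt_floor A
    push_cast
    linarith

lemma le_intCount {A B : ℝ} :
    B - A - 1 ≤ ((Finset.Ioo ⌊A⌋ ⌈B⌉).card : ℝ) := by
  rw [Int.card_Ioo]
  rcases le_or_gt (⌈B⌉ - ⌊A⌋ - 1) 0 with h | h
  · rw [Int.toNat_of_nonpos h]
    have h1 : (B : ℝ) ≤ (⌈B⌉ : ℝ) := Int.le_ceil B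
    have h2 : ((⌊A⌋ : ℝ)) ≤ A := Int.floor_le A
    have h3 : ((⌈B⌉ : ℝ)) ≤ ((⌊A⌋ : ℝ)) + 1 := by exact_mod_cast (by linarith [h] : (⌈B⌉ : ℤ) ≤ ⌊A⌋ + 1)
    push_cast
    linarith
  · have hcast : (((⌈B⌉ - ⌊A⌋ - 1).toNat : ℕ) : ℝ) = ((⌈B⌉ : ℝ)) - ((⌊A⌋ : ℝ)) - 1 := by
      rw [← Int.cast_natCast, Int.toNat_of_nonneg h.le]; push_cast; ring
    rw [hcast]
    have h1 : (B : ℝ) ≤ (⌈B⌉ : ℝ) := Int.le_ceil B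
    have h2 : ((⌊A⌋ : ℝ)) ≤ A := Int.floor_le A
    linarith


lemma int_eq_zero_of_dvd_of_abs_lt {q : ℤ} {d : ℤ} (hq : 0 < q) (hdvd : q ∣ d)
    (h1 : -q < d) (h2 : d < q) : d = 0 := by
  obtain ⟨k, rfl⟩ := hdvd
  rcases lt_trichotomy k 0 with hk | hk | hk
  · nlinarith
  · simp [hk]
  · nlinarith

/-- Upper bound: number of `j ∈ [1,q]` hitting the residue-class interval is at most
the number of integers in `(A, B)`. -/
lemma grid_upper (q : ℕ) (hq : 0 < q) (a : ℤ) (hcop : IsCoprime (q : ℤ) a) (A B : ℝ) :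
    (((Finset.Icc 1 q).filter (fun j : ℕ => ∃ n : ℤ,
        A < ((a * j - n * q : ℤ) : ℝ) ∧ ((a * j - n * q : ℤ) : ℝ) < B)).card : ℕ)
      ≤ (Finset.Ioo ⌊A⌋ ⌈B⌉).card := by
  have hqZ : (0 : ℤ) < (q : ℤ) := by exact_mod_cast hq
  set c : ℤ := ⌊A⌋ + 1 with hc
  apply Finset.card_le_card_of_injOn (fun j : ℕ => c + (a * j - c) % q)
  · intro j hj
    beta_reduce
    rw [Finset.mem_coe, Finset.mem_filter] at hj
    obtain ⟨hj1, n, hn1, hn2⟩ := hj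
    set z : ℤ := a * j - n * q with hz
    have hz1 : ⌊A⌋ < z := Int.floor_lt.mpr hn1
    have hz2 : z < ⌈B⌉ := Int.lt_ceil.mpr hn2
    have hmodeq : (z - c) % q = (a * j - c) % q := by
      have : z - c = (a * j - c) + (-n) * q := by ring
      rw [this, Int.add_mul_emod_self_right]
    have hmn : 0 ≤ (a * j - c) % q := Int.emod_nonneg _ (by positivity)
    have hzc : 0 ≤ z - c := by omega
    have hle : (z - c) % q ≤ z - c := by
      rw [Int.emod_def]
      have : 0 ≤ (z - c) / q := Int.ediv_nonneg hzc hqZ.le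
      nlinarith
    rw [Finset.mem_coe, Finset.mem_Ioo]
    constructor
    · omega
    · have : c + (a * j - c) % q ≤ z := by omega
      omega
  · intro j hj j' hj' hf
    simp only [Finset.coe_filter, Set.mem_setOf_eq, Finset.mem_Icc] at hj hj'
    have hf' : c + (a * (j : ℤ) - c) % q = c + (a * (j' : ℤ) - c) % q := hf
    have hmodeq : (a * j - c) % q = (a * j' - c) % q := by omega
    have hdvd : (q : ℤ) ∣ (a * j - c) - (a * j' - c) :=
      Int.dvd_of_emod_eq_zero (by
        rw [Int.sub_emod, hmodeq, sub_self, Int.zero_emod])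
    have hdvd2 : (q : ℤ) ∣ a * ((j : ℤ) - j') := by
      have : (a * j - c) - (a * j' - c) = a * ((j : ℤ) - j') := by ring
      rwa [this] at hdvd
    have hdvd3 : (q : ℤ) ∣ ((j : ℤ) - j') := hcop.dvd_of_dvd_mul_left hdvd2
    have hjq1 : (j : ℤ) ≤ q := by exact_mod_cast hj.1.2
    have hjq2 : (1 : ℤ) ≤ (j : ℤ) := by exact_mod_cast hj.1.1
    have hjq1' : (j' : ℤ) ≤ q := by exact_mod_cast hj'.1.2
    have hjq2' : (1 : ℤ) ≤ (j' : ℤ) := by exact_mod_cast hj'.1.1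
    have := int_eq_zero_of_dvd_of_abs_lt hqZ hdvd3 (by omega) (by omega)
    omega

/-- Lower bound companion. -/
lemma grid_lower (q : ℕ) (hq : 0 < q) (a : ℤ) (hcop : IsCoprime (q : ℤ) a)
    (A B : ℝ) (hBA : B - A ≤ q) :
    (Finset.Ioo ⌊A⌋ ⌈B⌉).card ≤
      ((Finset.Icc 1 q).filter (fun j : ℕ => ∃ n : ℤ,
        A < ((a * j - n * q : ℤ) : ℝ) ∧ ((a * j - n * q : ℤ) : ℝ) < B)).card := by
  have hqZ : (0 : ℤ) < (q : ℤ) := by exact_mod_cast hq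
  obtain ⟨x, b, hxb⟩ := hcop
  -- hxb : x * q + b * a = 1
  have hab : a * b ≡ 1 [ZMOD (q : ℤ)] := by
    have : a * b - 1 = (-x) * q := by linarith [hxb]
    exact Int.ModEq.symm (Int.modEq_iff_dvd.mpr ⟨-x, by linarith⟩)
  apply Finset.card_le_card_of_injOn (fun z : ℤ => 1 + ((b * z - 1) % q).toNat)
  · intro z hz
    beta_reduce
    rw [Finset.mem_coe, Finset.mem_Ioo] at hz
    have hm0 : 0 ≤ (b * z - 1) % q := Int.emod_nonneg _ (by positivity)
    have hmq : (b * z - 1) % q < q := Int.emod_lt_of_pos _ hqZ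
    set j : ℕ := 1 + ((b * z - 1) % q).toNat with hjdef
    have hjZ : (j : ℤ) = 1 + (b * z - 1) % q := by
      rw [hjdef]; push_cast [Int.toNat_of_nonneg hm0]; ring
    rw [Finset.mem_coe, Finset.mem_filter, Finset.mem_Icc]
    refine ⟨⟨by omega, by omega⟩, ?_⟩
    -- a * j ≡ z  [ZMOD q]
    have hmod : a * (j : ℤ) ≡ z [ZMOD (q : ℤ)] := by
      calc a * (j : ℤ) = a * (1 + (b * z - 1) % q) := by rw [hjZ]
        _ ≡ a * (1 + (b * z - 1)) [ZMOD (q : ℤ)] := by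
            exact Int.ModEq.mul_left a (Int.ModEq.add_left 1 (Int.emod_emod_of_dvd _ dvd_rfl))
        _ = (a * b) * z := by ring
        _ ≡ 1 * z [ZMOD (q : ℤ)] := Int.ModEq.mul_right z hab
        _ = z := by ring
    obtain ⟨n, hn⟩ := (Int.ModEq.dvd hmod)
    -- hn : z - a * j = q * n
    refine ⟨-n, ?_, ?_⟩
    · have : (a * (j : ℤ) - (-n) * q) = z := by linarith [hn]
      rw [this]
      exact Int.floor_lt.mp hz.1
    · have : (a * (j : ℤ) - (-n) * q) = z := by linarith [hn]
      rw [this]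
      exact Int.lt_ceil.mp hz.2
  · intro z hz z' hz' hf
    simp only [Finset.coe_Ioo, Set.mem_Ioo] at hz hz'
    have hm0 : 0 ≤ (b * z - 1) % q := Int.emod_nonneg _ (by positivity)
    have hm0' : 0 ≤ (b * z' - 1) % q := Int.emod_nonneg _ (by positivity)
    have hf' : (1 : ℕ) + ((b * z - 1) % q).toNat = 1 + ((b * z' - 1) % q).toNat := hf
    have hmodeq : (b * z - 1) % q = (b * z' - 1) % q := by omega
    have hdvd : (q : ℤ) ∣ b * (z - z') := by
      have h0 : ((b * z - 1) - (b * z' - 1)) % q = 0 := by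
        rw [Int.sub_emod, hmodeq, sub_self, Int.zero_emod]
      have := Int.dvd_of_emod_eq_zero h0
      have heq : (b * z - 1) - (b * z' - 1) = b * (z - z') := by ring
      rwa [heq] at this
    have hcop' : IsCoprime ((q : ℤ)) b := ⟨x, a, by linarith [hxb]⟩
    have hdvd2 : (q : ℤ) ∣ (z - z') := hcop'.dvd_of_dvd_mul_left hdvd
    -- |z - z'| < q since both in (⌊A⌋, ⌈B⌉) and B - A ≤ q
    have h1 : ((⌈B⌉ : ℝ)) < B + 1 := Int.ceil_lt_add_one B
    have h2 : A - 1 < ((⌊A⌋ : ℝ)) := Int.sub_one_lt_floor A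
    have hgap : (⌈B⌉ : ℤ) - ⌊A⌋ - 2 < (q : ℤ) := by
      have : ((⌈B⌉ : ℝ)) - ((⌊A⌋ : ℝ)) - 2 < (q : ℝ) := by linarith
      exact_mod_cast (by push_cast; linarith : ((⌈B⌉ - ⌊A⌋ - 2 : ℤ) : ℝ) < (q : ℝ))
    have := int_eq_zero_of_dvd_of_abs_lt hqZ hdvd2 (by omega) (by omega)
    omega


/-- The per-block estimate. -/
lemma block_est (α γ u v : ℝ) (hu : 0 ≤ u) (huv : u ≤ v) (hv : v ≤ 1)
    (q : ℕ) (hq : 0 < q) (a : ℤ) (hcop : IsCoprime (q : ℤ) a) (δ : ℝ) (hδ0 : 0 ≤ δ)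
    (hδ : |(q : ℝ) * α - a| ≤ δ) :
    |(cnt α γ u v q : ℝ) - q * (v - u)| ≤ 2 * q * δ + 1 := by
  have hqR : (0 : ℝ) < q := by exact_mod_cast hq
  -- the key perturbation estimate: for j ∈ [1, q] and n : ℤ,
  -- |(α*j+γ-n) - (γ + (a*j - n*q)/q)| ≤ δ
  have key : ∀ j : ℕ, j ∈ Finset.Icc 1 q → ∀ n : ℤ,
      |(α * j + γ - n) - (γ + ((a * j - n * q : ℤ) : ℝ) / q)| ≤ δ := by
    intro j hj n
    rw [Finset.mem_Icc] at hj
    have hjq : (j : ℝ) ≤ q := by exact_mod_cast hj.2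
    have hj0 : (0 : ℝ) ≤ j := by positivity
    have heq : (α * j + γ - n) - (γ + ((a * j - n * q : ℤ) : ℝ) / q)
        = ((q : ℝ) * α - a) * (j / q) := by
      push_cast
      field_simp
      ring
    rw [heq, abs_mul]
    have h1 : |(j : ℝ) / q| ≤ 1 := by
      rw [abs_of_nonneg (by positivity)]
      rw [div_le_one hqR]; exact hjq
    calc |(q : ℝ) * α - a| * |(j : ℝ) / q| ≤ δ * 1 := by
          apply mul_le_mul hδ h1 (abs_nonneg _) hδ0
      _ = δ := mul_one δ
  rw [abs_le]
  constructor
  swap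
  -- upper bound : cnt ≤ q*(v-u) + (2qδ+1)
  · have hsub : (Finset.Icc 1 q).filter (fun m : ℕ => Int.fract (α * m + γ) ∈ Set.Ioo u v)
        ⊆ (Finset.Icc 1 q).filter (fun j : ℕ => ∃ n : ℤ,
          (q : ℝ) * ((u - δ) - γ) < ((a * j - n * q : ℤ) : ℝ)
          ∧ ((a * j - n * q : ℤ) : ℝ) < (q : ℝ) * ((v + δ) - γ)) := by
      intro j hj
      rw [Finset.mem_filter] at hj ⊢
      obtain ⟨hj1, hj2⟩ := hj
      obtain ⟨n, hn1, hn2⟩ := (fract_mem_iff hu hv _).mp hj2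
      refine ⟨hj1, n, ?_, ?_⟩
      · have hk := abs_le.mp (key j hj1 n)
        have : u - δ < γ + ((a * j - n * q : ℤ) : ℝ) / q := by linarith [hk.2]
        calc (q : ℝ) * ((u - δ) - γ) < q * (((a * j - n * q : ℤ) : ℝ) / q) := by
              apply mul_lt_mul_of_pos_left _ hqR; linarith
          _ = ((a * j - n * q : ℤ) : ℝ) := by field_simp
      · have hk := abs_le.mp (key j hj1 n)
        have : γ + ((a * j - n * q : ℤ) : ℝ) / q < v + δ := by linarith [hk.1]
        calc ((a * j - n * q : ℤ) : ℝ) = q * (((a * j - n * q : ℤ) : ℝ) / q) := by field_simp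
          _ < (q : ℝ) * ((v + δ) - γ) := by
              apply mul_lt_mul_of_pos_left _ hqR; linarith
    have h1 := Finset.card_le_card hsub
    have h2 := grid_upper q hq a hcop ((q : ℝ) * ((u - δ) - γ)) ((q : ℝ) * ((v + δ) - γ))
    have h3 := intCount_le (A := (q : ℝ) * ((u - δ) - γ)) (B := (q : ℝ) * ((v + δ) - γ))
      (by nlinarith)
    have hc1 : (cnt α γ u v q : ℝ) ≤ (q : ℝ) * ((v + δ) - γ) - (q : ℝ) * ((u - δ) - γ) + 1 := by
      rw [cnt]
      calc _ ≤ (((Finset.Icc 1 q).filter (fun j : ℕ => ∃ n : ℤ,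
          (q : ℝ) * ((u - δ) - γ) < ((a * j - n * q : ℤ) : ℝ)
          ∧ ((a * j - n * q : ℤ) : ℝ) < (q : ℝ) * ((v + δ) - γ))).card : ℝ) := by
            exact_mod_cast h1
        _ ≤ ((Finset.Ioo ⌊(q : ℝ) * ((u - δ) - γ)⌋ ⌈(q : ℝ) * ((v + δ) - γ)⌉).card : ℝ) := by
            exact_mod_cast h2
        _ ≤ _ := h3
    nlinarith [hc1]
  -- lower bound
  · have hsub : (Finset.Icc 1 q).filter (fun j : ℕ => ∃ n : ℤ,
          (q : ℝ) * ((u + δ) - γ) < ((a * j - n * q : ℤ) : ℝ)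
          ∧ ((a * j - n * q : ℤ) : ℝ) < (q : ℝ) * ((v - δ) - γ))
        ⊆ (Finset.Icc 1 q).filter (fun m : ℕ => Int.fract (α * m + γ) ∈ Set.Ioo u v) := by
      intro j hj
      rw [Finset.mem_filter] at hj ⊢
      obtain ⟨hj1, n, hn1, hn2⟩ := hj
      refine ⟨hj1, (fract_mem_iff hu hv _).mpr ⟨n, ?_, ?_⟩⟩
      · have hk := abs_le.mp (key j hj1 n)
        have h' : u + δ - γ < ((a * j - n * q : ℤ) : ℝ) / q := by
          rw [lt_div_iff₀ hqR]; nlinarith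
        linarith [hk.1]
      · have hk := abs_le.mp (key j hj1 n)
        have h' : ((a * j - n * q : ℤ) : ℝ) / q < v - δ - γ := by
          rw [div_lt_iff₀ hqR]; nlinarith
        linarith [hk.2]
    have h1 := Finset.card_le_card hsub
    have h2 := grid_lower q hq a hcop ((q : ℝ) * ((u + δ) - γ)) ((q : ℝ) * ((v - δ) - γ))
      (by nlinarith)
    have h3 := le_intCount (A := (q : ℝ) * ((u + δ) - γ)) (B := (q : ℝ) * ((v - δ) - γ))
    have hc1 : (q : ℝ) * ((v - δ) - γ) - (q : ℝ) * ((u + δ) - γ) - 1 ≤ (cnt α γ u v q : ℝ) := by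
      rw [cnt]
      calc (q : ℝ) * ((v - δ) - γ) - (q : ℝ) * ((u + δ) - γ) - 1
          ≤ ((Finset.Ioo ⌊(q : ℝ) * ((u + δ) - γ)⌋ ⌈(q : ℝ) * ((v - δ) - γ)⌉).card : ℝ) := h3
        _ ≤ (((Finset.Icc 1 q).filter (fun j : ℕ => ∃ n : ℤ,
          (q : ℝ) * ((u + δ) - γ) < ((a * j - n * q : ℤ) : ℝ)
          ∧ ((a * j - n * q : ℤ) : ℝ) < (q : ℝ) * ((v - δ) - γ))).card : ℝ) := by
            exact_mod_cast h2
        _ ≤ _ := by exact_mod_cast h1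
    nlinarith [hc1]

/-- Splitting the count. -/
lemma cnt_add (α β u v : ℝ) (M₁ M₂ : ℕ) :
    cnt α β u v (M₁ + M₂) = cnt α β u v M₁ + cnt α (β + α * M₁) u v M₂ := by
  have hsplit : Finset.Icc 1 (M₁ + M₂) = Finset.Icc 1 M₁ ∪ Finset.Ioc M₁ (M₁ + M₂) := by
    ext m; simp only [Finset.mem_Icc, Finset.mem_union, Finset.mem_Ioc]; omega
  have hdisj : Disjoint (Finset.Icc 1 M₁) (Finset.Ioc M₁ (M₁ + M₂)) := by
    rw [Finset.disjoint_left]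
    intro m hm hm'
    simp only [Finset.mem_Icc, Finset.mem_Ioc] at hm hm'
    omega
  rw [cnt, hsplit, Finset.filter_union, Finset.card_union_of_disjoint
    (Finset.disjoint_filter_filter hdisj)]
  congr 1
  rw [cnt]
  apply Finset.card_bij (fun m _ => m - M₁)
  · intro m hm
    rw [Finset.mem_filter, Finset.mem_Ioc] at hm
    rw [Finset.mem_filter, Finset.mem_Icc]
    refine ⟨by omega, ?_⟩
    have harg : α * ((m - M₁ : ℕ) : ℝ) + (β + α * M₁) = α * m + β := by
      have : ((m - M₁ : ℕ) : ℝ) = (m : ℝ) - M₁ := by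
        have : M₁ ≤ m := by omega
        push_cast [this]; ring
      rw [this]; ring
    rw [harg]
    exact hm.2
  · intro m hm m' hm' h
    rw [Finset.mem_filter, Finset.mem_Ioc] at hm hm'
    omega
  · intro j hj
    rw [Finset.mem_filter, Finset.mem_Icc] at hj
    refine ⟨M₁ + j, ?_, by omega⟩
    rw [Finset.mem_filter, Finset.mem_Ioc]
    refine ⟨by omega, ?_⟩
    have harg : α * ((M₁ + j : ℕ) : ℝ) + β = α * j + (β + α * M₁) := by push_cast; ring
    rw [harg]
    exact hj.2

/-- Summing over `B` blocks of length `q`. -/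
lemma blocks_est (α u v : ℝ) (q : ℕ) (e : ℝ)
    (hblk : ∀ γ : ℝ, |(cnt α γ u v q : ℝ) - q * (v - u)| ≤ e) :
    ∀ B : ℕ, ∀ β : ℝ, |(cnt α β u v (B * q) : ℝ) - (B * q : ℕ) * (v - u)| ≤ B * e := by
  intro B
  induction B with
  | zero => intro β; simp [cnt]
  | succ B ih =>
    intro β
    have h1 : (B + 1) * q = B * q + q := by ring
    rw [h1, cnt_add]
    have h2 := ih β
    have h3 := hblk (β + α * ((B * q : ℕ) : ℝ))
    have hfin : ((B + 1 : ℕ) : ℝ) * e = (B : ℝ) * e + e := by push_cast; ring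
    rw [hfin]
    have heq : ((cnt α β u v (B * q) + cnt α (β + α * ((B * q : ℕ) : ℝ)) u v q : ℕ) : ℝ)
        - ((B * q + q : ℕ) : ℝ) * (v - u)
        = ((cnt α β u v (B * q) : ℝ) - ((B * q : ℕ) : ℝ) * (v - u))
          + ((cnt α (β + α * ((B * q : ℕ) : ℝ)) u v q : ℝ) - (q : ℝ) * (v - u)) := by
      push_cast; ring
    rw [heq]
    exact le_trans (abs_add_le _ _) (add_le_add h2 h3)


/-- Dirichlet's theorem with a coprime pair. -/
lemma dirichlet_reduced (α : ℝ) (M : ℕ) (hM : 1 ≤ M) :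
    ∃ (q : ℕ) (a : ℤ), 0 < q ∧ q ≤ M ∧ IsCoprime (q : ℤ) a ∧
      |(q : ℝ) * α - a| ≤ 1 / (M + 1) := by
  obtain ⟨j, k, hk0, hkM, hjk⟩ := Real.exists_int_int_abs_mul_sub_le α (n := M) hM
  set d : ℕ := Int.gcd k j with hd
  have hdvdk : (d : ℤ) ∣ k := Int.gcd_dvd_left k j
  have hdvdj : (d : ℤ) ∣ j := Int.gcd_dvd_right k j
  have hd0 : 0 < d := Int.gcd_pos_of_ne_zero_left j (by omega)
  have hdZ : (0 : ℤ) < (d : ℤ) := by exact_mod_cast hd0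
  set q' : ℤ := k / d with hq'
  set a : ℤ := j / d with ha
  have hkeq : (d : ℤ) * q' = k := Int.mul_ediv_cancel' hdvdk
  have hjeq : (d : ℤ) * a = j := Int.mul_ediv_cancel' hdvdj
  have hq'0 : 0 < q' := by nlinarith
  have hq'k : q' ≤ k := by nlinarith
  have hcop : IsCoprime q' a := by
    rw [Int.isCoprime_iff_gcd_eq_one]
    exact Int.gcd_div_gcd_div_gcd (by rw [← hd]; exact hd0)
  refine ⟨q'.toNat, a, by omega, by omega, ?_, ?_⟩
  · rwa [Int.toNat_of_nonneg hq'0.le]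
  · have hcastq : ((q'.toNat : ℕ) : ℝ) = ((q' : ℤ) : ℝ) := by
      rw [← Int.cast_natCast, Int.toNat_of_nonneg hq'0.le]
    rw [hcastq]
    have hdR : (1 : ℝ) ≤ (d : ℝ) := by exact_mod_cast hd0
    have heq : (k : ℝ) * α - j = (d : ℝ) * ((q' : ℝ) * α - a) := by
      have h1 : ((k : ℤ) : ℝ) = ((d : ℤ) : ℝ) * ((q' : ℤ) : ℝ) := by exact_mod_cast hkeq.symm
      have h2 : ((j : ℤ) : ℝ) = ((d : ℤ) : ℝ) * ((a : ℤ) : ℝ) := by exact_mod_cast hjeq.symm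
      push_cast at h1 h2 ⊢
      rw [h1, h2]; ring
    have habs : |(q' : ℝ) * α - a| ≤ |(k : ℝ) * α - j| := by
      rw [heq, abs_mul, abs_of_pos (by linarith : (0:ℝ) < (d:ℝ))]
      nlinarith [abs_nonneg ((q' : ℝ) * α - a)]
    exact le_trans habs hjk


lemma arith_final (X cS K θ : ℝ) (hX : 1 ≤ X) (hKθ : K * (1 - θ) = 2 + cS) :
    (2 + cS * X) + K * θ * X ≤ K * X := by nlinarith [hX, hKθ]

lemma arith_exp (τ ε ε₁ : ℝ) (hτ : 0 < τ) (hε : 0 < ε) (hε₁ : ε₁ = ε * τ ^ 2 / 2) :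
    1 / τ - 1 / (τ + ε₁) ≤ ε / 2 := by
  have hτε : 0 < τ + ε₁ := by nlinarith
  rw [div_sub_div _ _ (ne_of_gt hτ) (ne_of_gt hτε), div_le_iff₀ (by positivity)]
  nlinarith [mul_pos hτ (mul_pos hε hτ)]

end Stmt10Aux

open Stmt10Aux

set_option maxHeartbeats 2000000 in
/-- For `α` irrational of finite type `τ` and any real `β`, the discrepancy of the
sequence `{α m + β}`, `m = 1, …, M`, is at most `M^{-1/τ + ε}` for every `ε > 0` and all
sufficiently large `M` (uniformly over all subintervals of `[0,1)`). -/
theorem stmt_10 (α τ : ℝ) (hirr : Irrational α) (hτ : 0 < τ)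
    (htype : ∀ ε > (0 : ℝ), ∃ c > (0 : ℝ), ∀ q : ℕ, 0 < q →
      c * (q : ℝ) ^ (-τ - ε) ≤ nint ((q : ℝ) * α))
    (β : ℝ) (ε : ℝ) (hε : 0 < ε) :
    ∃ M₀ : ℕ, ∀ M : ℕ, M₀ ≤ M → ∀ a b : ℝ, 0 ≤ a → a ≤ b → b ≤ 1 →
      |(((Finset.Icc 1 M).filter
          (fun m : ℕ => Int.fract (α * m + β) ∈ Set.Ioo a b)).card : ℝ) / M - (b - a)|
        ≤ (M : ℝ) ^ (-1 / τ + ε) := by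
  -- Step 1: τ ≥ 1.
  have hτ1 : 1 ≤ τ := by
    by_contra hcon
    push_neg at hcon
    have hε' : 0 < (1 - τ) / 2 := by linarith
    obtain ⟨c', hc'0, hc'⟩ := htype ((1 - τ) / 2) hε'
    obtain ⟨N₀, hN₀⟩ := exists_nat_ge ((2 / c') ^ (2 / (1 - τ)))
    set N := max N₀ 1 with hNdef
    have hN1 : 1  ≤ N := le_max_right _ _
    have hNR1 : (1 : ℝ) ≤ N := by exact_mod_cast hN1
    have hNR0 : (0 : ℝ) < N := by linarith
    have hNR : ((2 / c') ^ (2 / (1 - τ)) : ℝ) ≤ N := by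
      refine le_trans hN₀ ?_
      exact_mod_cast le_max_left N₀ 1
    obtain ⟨q, a, hq0, hqN, hcop, hqa⟩ := dirichlet_reduced α N hN1
    have hqR : (0 : ℝ) < q := by exact_mod_cast hq0
    have hqNR : (q : ℝ) ≤ N := by exact_mod_cast hqN
    have h1 : c' * (q : ℝ) ^ (-τ - (1 - τ) / 2) ≤ 1 / (N + 1) := by
      refine le_trans (le_trans (hc' q hq0) ?_) hqa
      simpa [nint] using round_le ((q : ℝ) * α) a
    have h2 : (N : ℝ) ^ (-τ - (1 - τ) / 2) ≤ (q : ℝ) ^ (-τ - (1 - τ) / 2) := by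
      apply Real.rpow_le_rpow_of_nonpos hqR hqNR
      linarith
    have h3 : c' * (N : ℝ) ^ (-τ - (1 - τ) / 2) ≤ 1 / N := by
      calc c' * (N : ℝ) ^ (-τ - (1 - τ) / 2) ≤ c' * (q : ℝ) ^ (-τ - (1 - τ) / 2) := by
            apply mul_le_mul_of_nonneg_left h2 hc'0.le
        _ ≤ 1 / (N + 1) := h1
        _ ≤ 1 / N := by apply one_div_le_one_div_of_le hNR0; linarith
    -- rewrite: N^(-τ-(1-τ)/2) = N^((1-τ)/2) / N
    have hexp : (-τ - (1 - τ) / 2 : ℝ) = ((1 - τ) / 2) + (-1) := by ring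
    have h4 : (N : ℝ) ^ (-τ - (1 - τ) / 2) = (N : ℝ) ^ ((1 - τ) / 2) / N := by
      rw [hexp, Real.rpow_add hNR0, Real.rpow_neg_one]
      ring
    have h5 : c' * (N : ℝ) ^ ((1 - τ) / 2) ≤ 1 := by
      have h3' := h3
      rw [h4, ← mul_div_assoc, div_le_div_iff₀ hNR0 hNR0] at h3'
      nlinarith [h3']
    have h6 : (2 / c') ≤ (N : ℝ) ^ ((1 - τ) / 2) := by
      have hmm : (2 / (1 - τ)) * ((1 - τ) / 2) = 1 := by
        rw [div_mul_div_comm, mul_comm (1 - τ) 2]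
        exact div_self (by nlinarith : (0:ℝ) < 2 * (1 - τ)).ne'
      calc (2 / c') = ((2 / c') ^ (2 / (1 - τ))) ^ ((1 - τ) / 2) := by
            rw [← Real.rpow_mul (by positivity), hmm, Real.rpow_one]
        _ ≤ (N : ℝ) ^ ((1 - τ) / 2) := by
            apply Real.rpow_le_rpow (by positivity) hNR (by linarith)
    have h7 : c' * (2 / c') = 2 := by field_simp
    nlinarith [mul_le_mul_of_nonneg_left h6 hc'0.le]
  -- Step 2: constants
  set ε₁ : ℝ := ε * τ ^ 2 / 2 with hε₁def
  have hε₁ : 0 < ε₁ := by positivity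
  obtain ⟨c, hc0, hc⟩ := htype ε₁ hε₁
  have hτε : (0 : ℝ) < τ + ε₁ := by linarith
  have hτε1 : (1 : ℝ) < τ + ε₁ := by linarith
  set σ : ℝ := 1 / (τ + ε₁) with hσdef
  have hσ0 : 0 < σ := by positivity
  have hσ1 : σ < 1 := by rw [hσdef, div_lt_one hτε]; linarith
  set θ : ℝ := (2 : ℝ) ^ (σ - 1) with hθdef
  have hθ0 : 0 < θ := Real.rpow_pos_of_pos two_pos _
  have hθ1 : θ < 1 := Real.rpow_lt_one_of_one_lt_of_neg one_lt_two (by linarith)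
  have hcσ0 : (0 : ℝ) < c ^ (-σ) := Real.rpow_pos_of_pos hc0 _
  set K : ℝ := (2 + c ^ (-σ)) / (1 - θ) with hKdef
  have hK0 : 0 < K := div_pos (by linarith) (by linarith)
  have hKθ : K * (1 - θ) = 2 + c ^ (-σ) := by
    rw [hKdef]
    exact div_mul_cancel₀ _ (by linarith : (1:ℝ) - θ ≠ 0)
  -- Step 3: the main discrepancy estimate by strong induction
  have main : ∀ M : ℕ, ∀ β' u v : ℝ, 0 ≤ u → u ≤ v → v ≤ 1 →
      |(cnt α β' u v M : ℝ) - M * (v - u)| ≤ K * (M : ℝ) ^ (1 - σ) := by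
    intro M
    induction M using Nat.strong_induction_on with
    | _ M ih =>
      intro β' u v hu huv hv
      rcases Nat.eq_zero_or_pos M with rfl | hM1
      · have hz : cnt α β' u v 0 = 0 := by
          rw [cnt, Finset.Icc_eq_empty (by norm_num : ¬ (1:ℕ) ≤ 0), Finset.filter_empty,
            Finset.card_empty]
        rw [hz]
        simp only [Nat.cast_zero, zero_mul, sub_zero, abs_zero]
        rw [Real.zero_rpow (by linarith : (1:ℝ) - σ ≠ 0)]
        simp
      · obtain ⟨q, a, hq0, hqM, hcop, hqa⟩ := dirichlet_reduced α M hM1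
        have hqR : (0 : ℝ) < q := by exact_mod_cast hq0
        have hMR : (1 : ℝ) ≤ M := by exact_mod_cast hM1
        have hM0R : (0 : ℝ) < M := by linarith
        -- lower bound for q
        have hnint : c * (q : ℝ) ^ (-τ - ε₁) ≤ 1 / (M + 1) := by
          refine le_trans (le_trans (hc q hq0) ?_) hqa
          simpa [nint] using round_le ((q : ℝ) * α) a
        have hP0 : (0 : ℝ) < (q : ℝ) ^ (τ + ε₁) := Real.rpow_pos_of_pos hqR _
        have h1 : c * (M : ℝ) ≤ (q : ℝ) ^ (τ + ε₁) := by
          have hrw : (q : ℝ) ^ (-τ - ε₁) = ((q : ℝ) ^ (τ + ε₁))⁻¹ := by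
            rw [show (-τ - ε₁ : ℝ) = -(τ + ε₁) by ring, Real.rpow_neg hqR.le]
          rw [hrw] at hnint
          have h1a : c * ((q : ℝ) ^ (τ + ε₁))⁻¹ ≤ 1 / M := by
            refine le_trans hnint ?_
            apply one_div_le_one_div_of_le hM0R; linarith
          rw [mul_inv_le_iff₀ hP0] at h1a
          rw [div_mul_eq_mul_div, le_div_iff₀ hM0R] at h1a
          linarith only [h1a]
        have h2 : (c * M) ^ σ ≤ (q : ℝ) := by
          have hqq : ((q : ℝ) ^ (τ + ε₁)) ^ σ = q := by
            rw [← Real.rpow_mul hqR.le]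
            rw [show (τ + ε₁) * σ = 1 by rw [hσdef]; field_simp]
            exact Real.rpow_one _
          calc (c * M) ^ σ ≤ ((q : ℝ) ^ (τ + ε₁)) ^ σ :=
                Real.rpow_le_rpow (by positivity) h1 hσ0.le
            _ = q := hqq
        set B := M / q with hBdef
        set r := M % q with hrdef
        have hMBr : M = B * q + r := (Nat.div_add_mod' M q).symm
        have hBq : B * q ≤ M := Nat.div_mul_le_self M q
        have hB1 : 1 ≤ B := (Nat.one_le_div_iff hq0).mpr hqM
        have hrq : r < q := Nat.mod_lt M hq0
        have hrM : r < M := lt_of_lt_of_le hrq hqM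
        have h2r : 2 * r ≤ M := by
          have hqB : q ≤ B * q := Nat.le_mul_of_pos_left q hB1
          omega
        have h2rR : (r : ℝ) ≤ (M : ℝ) / 2 := by
          have : (2 : ℝ) * r ≤ M := by exact_mod_cast h2r
          linarith only [this]
        -- block estimate
        have hδ0 : (0 : ℝ) ≤ 1 / (M + 1) := by positivity
        have hblk := fun γ => block_est α γ u v hu huv hv q hq0 a hcop (1 / (M + 1)) hδ0 hqa
        have hblocks := blocks_est α u v q (2 * q * (1 / (M + 1)) + 1) hblk B β'
        have hsplit := cnt_add α β' u v (B * q) r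
        rw [← hMBr] at hsplit
        have hr_est := ih r hrM (β' + α * ((B * q : ℕ) : ℝ)) u v hu huv hv
        -- assemble
        have hMcast : (M : ℝ) = ((B * q : ℕ) : ℝ) + (r : ℝ) := by exact_mod_cast congrArg (Nat.cast : ℕ → ℝ) hMBr
        have hdecomp : (cnt α β' u v M : ℝ) - M * (v - u)
            = ((cnt α β' u v (B * q) : ℝ) - ((B * q : ℕ) : ℝ) * (v - u))
              + ((cnt α (β' + α * ((B * q : ℕ) : ℝ)) u v r : ℝ) - (r : ℝ) * (v - u)) := by
          rw [hsplit, hMcast]; push_cast; ring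
        have habs : |(cnt α β' u v M : ℝ) - M * (v - u)|
            ≤ (B : ℝ) * (2 * q * (1 / (M + 1)) + 1) + K * (r : ℝ) ^ (1 - σ) := by
          rw [hdecomp]
          exact le_trans (abs_add_le _ _) (add_le_add hblocks hr_est)
        -- arithmetic bounds
        have hX1 : (1 : ℝ) ≤ (M : ℝ) ^ (1 - σ) := Real.one_le_rpow hMR (by linarith)
        have hBqR : (B : ℝ) * q ≤ M := by exact_mod_cast hBq
        have e1 : (B : ℝ) * (2 * q * (1 / (M + 1)) + 1) = 2 * ((B : ℝ) * q) / (M + 1) + B := by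
          ring
        have e2 : 2 * ((B : ℝ) * q) / (M + 1) ≤ 2 := by
          rw [div_le_iff₀ (by linarith only [hM0R] : (0:ℝ) < (M:ℝ) + 1)]
          linarith only [hBqR]
        have hcM0 : (0 : ℝ) < (c * M) ^ σ := Real.rpow_pos_of_pos (by positivity) _
        have e3 : (B : ℝ) ≤ c ^ (-σ) * (M : ℝ) ^ (1 - σ) := by
          have h3a : (B : ℝ) ≤ (M : ℝ) / q := by
            rw [le_div_iff₀ hqR]; exact hBqR
          have h3b : (M : ℝ) / q ≤ (M : ℝ) / ((c * M) ^ σ) :=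
            div_le_div_of_nonneg_left (by linarith) hcM0 h2
          have h3c : (M : ℝ) / ((c * M) ^ σ) = c ^ (-σ) * (M : ℝ) ^ (1 - σ) := by
            rw [Real.mul_rpow hc0.le hM0R.le, Real.rpow_neg hc0.le,
              Real.rpow_sub hM0R, Real.rpow_one]
            have hc_ne : c ^ σ ≠ 0 := (Real.rpow_pos_of_pos hc0 _).ne'
            have hM_ne : (M : ℝ) ^ σ ≠ 0 := (Real.rpow_pos_of_pos hM0R _).ne'
            field_simp
          linarith only [h3b, h3a, h3c.le]
        have e4 : K * (r : ℝ) ^ (1 - σ) ≤ K * θ * (M : ℝ) ^ (1 - σ) := by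
          have h4a : (r : ℝ) ^ (1 - σ) ≤ ((M : ℝ) / 2) ^ (1 - σ) :=
            Real.rpow_le_rpow (by positivity) h2rR (by linarith)
          have h4b : ((M : ℝ) / 2) ^ (1 - σ) = θ * (M : ℝ) ^ (1 - σ) := by
            rw [Real.div_rpow hM0R.le (by norm_num : (0:ℝ) ≤ 2), hθdef]
            rw [show (σ - 1 : ℝ) = -(1 - σ) by ring, Real.rpow_neg (by norm_num : (0:ℝ) ≤ 2)]
            have h2ne : (2 : ℝ) ^ (1 - σ) ≠ 0 := (Real.rpow_pos_of_pos two_pos _).ne'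
            field_simp
          calc K * (r : ℝ) ^ (1 - σ) ≤ K * ((M : ℝ) / 2) ^ (1 - σ) := by
                apply mul_le_mul_of_nonneg_left h4a hK0.le
            _ = K * θ * (M : ℝ) ^ (1 - σ) := by rw [h4b]; ring
        calc |(cnt α β' u v M : ℝ) - M * (v - u)|
            ≤ (B : ℝ) * (2 * q * (1 / (M + 1)) + 1) + K * (r : ℝ) ^ (1 - σ) := habs
          _ ≤ (2 + c ^ (-σ) * (M : ℝ) ^ (1 - σ)) + K * θ * (M : ℝ) ^ (1 - σ) := by
              rw [e1]; linarith only [e2, e3, e4]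
          _ ≤ K * (M : ℝ) ^ (1 - σ) := arith_final _ _ _ _ hX1 hKθ
  -- Step 4: conclusion
  obtain ⟨M₁, hM₁⟩ := exists_nat_ge (K ^ (2 / ε))
  refine ⟨max M₁ 1, ?_⟩
  intro M hM a b ha hab hb1
  have hM1 : 1 ≤ M := le_trans (le_max_right _ _) hM
  have hMR : (1 : ℝ) ≤ M := by exact_mod_cast hM1
  have hM0R : (0 : ℝ) < M := by linarith
  have hKM : K ≤ (M : ℝ) ^ (ε / 2) := by
    have hh : (K ^ (2 / ε) : ℝ) ≤ M := by
      refine le_trans hM₁ ?_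
      exact_mod_cast le_trans (le_max_left M₁ 1) hM
    calc K = (K ^ (2 / ε)) ^ (ε / 2) := by
          rw [← Real.rpow_mul hK0.le]
          rw [show (2 / ε) * (ε / 2) = 1 by field_simp]
          exact (Real.rpow_one K).symm
      _ ≤ (M : ℝ) ^ (ε / 2) := Real.rpow_le_rpow (by positivity) hh (by positivity)
  have hmain := main M β a b ha hab hb1
  have hexp_le : ε / 2 + (1 - σ) ≤ (-1 / τ + ε) + 1 := by
    have hgap : 1 / τ - σ ≤ ε / 2 := by
      rw [hσdef]
      exact arith_exp τ ε ε₁ hτ hε hε₁def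
    have hneg : (-1 : ℝ) / τ = -(1 / τ) := by ring
    rw [hneg]
    linarith only [hgap]
  have heq0 : ((((Finset.Icc 1 M).filter
      (fun m : ℕ => Int.fract (α * m + β) ∈ Set.Ioo a b)).card : ℕ) : ℝ) = (cnt α β a b M : ℝ) := rfl
  rw [heq0]
  have heq1 : (cnt α β a b M : ℝ) / M - (b - a) = ((cnt α β a b M : ℝ) - M * (b - a)) / M := by
    field_simp
  rw [heq1, abs_div, abs_of_pos hM0R, div_le_iff₀ hM0R]
  calc |(cnt α β a b M : ℝ) - M * (b - a)| ≤ K * (M : ℝ) ^ (1 - σ) := hmain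
    _ ≤ (M : ℝ) ^ (ε / 2) * (M : ℝ) ^ (1 - σ) := by
        apply mul_le_mul_of_nonneg_right hKM (Real.rpow_nonneg hM0R.le _)
    _ = (M : ℝ) ^ (ε / 2 + (1 - σ)) := (Real.rpow_add hM0R _ _).symm
    _ ≤ (M : ℝ) ^ ((-1 / τ + ε) + 1) := Real.rpow_le_rpow_of_exponent_le hMR hexp_le
    _ = (M : ℝ) ^ (-1 / τ + ε) * M := by rw [Real.rpow_add hM0R, Real.rpow_one]
end
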